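/- (Sandwich Lemma) Let (n_k) be a sequence of non-zero integers such that P⁺(n_k) → ∞ as k → ∞ and the insulators 𝔦(n_k) are bounded. Let α and β be real numbers with 0 < α < log 2 and β > log 4. Then for all sufficiently large k, the inequality α · P⁺(n_k) < log rad(n_k) < β · P⁺(n_k) holds. -/

import Mathlib

open Filter

/-- `(A,B,C)` is a primitive non-cuspidal solution to `A + B + C = 0`. -/
def IsABC (A B C : ℤ) : Prop :=
  A + B + C = 0 ∧ Int.gcd (Int.gcd A B) C = 1 ∧ A * B * C ≠ 0

/-- The height `H(A,B,C) = max {|A|, |B|, |C|}`. -/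
def height (A B C : ℤ) : ℤ := max |A| (max |B| |C|)

/-- The radical of a nonzero integer: its largest squarefree divisor,
the product of the distinct primes dividing it. -/
def rad (n : ℤ) : ℕ := ∏ p ∈ n.natAbs.primeFactors, p

/-- `P⁺(n)`: the largest prime divisor of `n`, or `1` if `|n| = 1`. -/
def Pplus (n : ℤ) : ℕ := max (n.natAbs.primeFactors.sup id) 1

/-- A nonzero integer `m` is insulated if every prime `p ≤ P⁺(m)` divides `m`. -/
def Insulated (m : ℤ) : Prop :=
  m ≠ 0 ∧ ∀ p : ℕ, p.Prime → p ≤ Pplus m → (p : ℤ) ∣ m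

/-- The insulator `𝔦(n)`: the smallest positive integer `I` such that `n * I` is insulated. -/
noncomputable def insulator (n : ℤ) : ℕ := sInf {I : ℕ | 0 < I ∧ Insulated (n * I)}

/-!
For an insulated `m` the primes dividing `m` are exactly the primes up to `P⁺(m)`, so
`rad m = P⁺(m)#`. Since `rad (n 𝔦(n)) ≤ rad n * 𝔦(n)` and `P⁺(n) ≤ P⁺(n 𝔦(n))`, this gives
`P⁺(n)# ≤ rad n * 𝔦(n)`, while trivially `rad n ∣ P⁺(n)#`. Hence `log rad n` lies between
`θ(P⁺(n)) - log 𝔦(n)` and `θ(P⁺(n)) = log P⁺(n)#`, and Chebyshev's bounds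
`x log 2 - O(√x log x) ≤ θ(x) ≤ x log 4` finish the proof.
-/

open Real Asymptotics

lemma isLittleO_log_add_one_add_sqrt_mul_log :
    (fun x : ℝ => log (x + 1) + 2 * √x * log x) =o[atTop] id := by
  have hlog_succ : (fun x : ℝ => log (x + 1)) =o[atTop] id := by
    refine (isLittleO_log_id_atTop.comp_tendsto (tendsto_atTop_add_const_right _ 1 tendsto_id))
      |>.trans_isBigO (IsBigO.of_bound 2 ?_)
    filter_upwards [eventually_ge_atTop 1] with x hx
    simp only [Function.comp_apply, id, norm_of_nonneg (by linarith : (0 : ℝ) ≤ x + 1),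
      norm_of_nonneg (by linarith : (0 : ℝ) ≤ x)]
    linarith
  have hsqrt_log : (fun x : ℝ => √x * log x) =o[atTop] id := by
    have hlog : log =o[atTop] fun x : ℝ => √x := by
      simpa only [sqrt_eq_rpow] using isLittleO_log_rpow_atTop (by norm_num : (0 : ℝ) < 1 / 2)
    refine ((isBigO_refl (fun x : ℝ => √x) atTop).mul_isLittleO hlog).congr' .rfl ?_
    filter_upwards [eventually_ge_atTop 0] with x hx
    exact mul_self_sqrt hx
  simpa only [mul_assoc] using hlog_succ.add (hsqrt_log.const_mul_left 2)

lemma eventually_lt_log_primorial {α : ℝ} (hα : α < log 2) (C : ℝ) :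
    ∀ᶠ N : ℕ in atTop, α * N + C < log (primorial N) := by
  have hε : 0 < (log 2 - α) / 2 := by linarith
  have hbound := ((isLittleO_log_add_one_add_sqrt_mul_log.add (isLittleO_const_id_atTop C)).bound
    hε).natCast_atTop
  filter_upwards [hbound, eventually_gt_atTop 0] with N hN hN0
  have hN0' : (0 : ℝ) < N := by exact_mod_cast hN0
  have hθ := Chebyshev.theta_ge N
  rw [Chebyshev.theta_eq_log_primorial, Nat.floor_natCast] at hθ
  rw [id, norm_of_nonneg hN0'.le, norm_eq_abs] at hN
  linarith [le_abs_self (log (N + 1) + 2 * √N * log N + C), mul_pos (sub_pos.2 hα) hN0']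

lemma rad_pos (n : ℤ) : 0 < rad n :=
  Finset.prod_pos fun _ hp => (Nat.prime_of_mem_primeFactors hp).pos

lemma one_le_Pplus (n : ℤ) : 1 ≤ Pplus n := le_max_right _ _

lemma le_Pplus {n : ℤ} {p : ℕ} (hp : p ∈ n.natAbs.primeFactors) : p ≤ Pplus n :=
  (Finset.le_sup (f := id) hp).trans (le_max_left _ _)

lemma Pplus_le {n : ℤ} {N : ℕ} (hN : 1 ≤ N) (h : ∀ p ∈ n.natAbs.primeFactors, p ≤ N) :
    Pplus n ≤ N :=
  max_le (Finset.sup_le h) hN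

lemma Pplus_le_Pplus_of_dvd {a b : ℤ} (h : a ∣ b) (hb : b ≠ 0) : Pplus a ≤ Pplus b :=
  Pplus_le (one_le_Pplus b) fun _ hp =>
    le_Pplus (Nat.primeFactors_mono (Int.natAbs_dvd_natAbs.2 h) (Int.natAbs_ne_zero.2 hb) hp)

lemma primeFactors_subset_primesLE_Pplus (n : ℤ) :
    n.natAbs.primeFactors ⊆ Nat.primesLE (Pplus n) := fun _ hp =>
  Nat.mem_primesLE.2 ⟨le_Pplus hp, Nat.prime_of_mem_primeFactors hp⟩

lemma rad_dvd_primorial_Pplus (n : ℤ) : rad n ∣ primorial (Pplus n) :=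
  Finset.prod_dvd_prod_of_subset _ _ _ (primeFactors_subset_primesLE_Pplus n)

lemma rad_mul_dvd {a b : ℤ} (ha : a ≠ 0) (hb : b ≠ 0) : rad (a * b) ∣ rad a * rad b := by
  rw [rad, Int.natAbs_mul, Nat.primeFactors_mul (Int.natAbs_ne_zero.2 ha) (Int.natAbs_ne_zero.2 hb)]
  exact Dvd.intro _ Finset.prod_union_inter

lemma rad_natCast_le {I : ℕ} (hI : 0 < I) : rad I ≤ I :=
  Nat.le_of_dvd hI (by simpa [rad] using Nat.prod_primeFactors_dvd I)

lemma Insulated.rad_eq {m : ℤ} (h : Insulated m) : rad m = primorial (Pplus m) := by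
  refine Finset.prod_congr ((primeFactors_subset_primesLE_Pplus m).antisymm fun p hp => ?_)
    fun _ _ => rfl
  obtain ⟨hpP, hp⟩ := Nat.mem_primesLE.1 hp
  exact Nat.mem_primeFactors.2 ⟨hp, Int.natCast_dvd.1 (h.2 p hp hpP), Int.natAbs_ne_zero.2 h.1⟩

lemma insulated_mul_primorial_Pplus {n : ℤ} (hn : n ≠ 0) :
    Insulated (n * primorial (Pplus n)) := by
  have hP : (primorial (Pplus n) : ℤ) ≠ 0 := by exact_mod_cast primorial_ne_zero _
  refine ⟨mul_ne_zero hn hP, fun p hp hpP => ?_⟩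
  have hfactors : (n * primorial (Pplus n)).natAbs.primeFactors ⊆ Nat.primesLE (Pplus n) := by
    rw [Int.natAbs_mul, Int.natAbs_natCast,
      Nat.primeFactors_mul (Int.natAbs_ne_zero.2 hn) (primorial_ne_zero _), primeFactors_primorial]
    exact Finset.union_subset (primeFactors_subset_primesLE_Pplus n) subset_rfl
  have hPle : Pplus (n * primorial (Pplus n)) ≤ Pplus n :=
    Pplus_le (one_le_Pplus n) fun q hq => (Nat.mem_primesLE.1 (hfactors hq)).1
  exact Dvd.dvd.mul_left (Int.natCast_dvd_natCast.2 ((hp.dvd_primorial_iff).2 (hpP.trans hPle))) n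

lemma insulator_pos_and_insulated {n : ℤ} (hn : n ≠ 0) :
    0 < insulator n ∧ Insulated (n * insulator n) :=
  Nat.sInf_mem (s := {I : ℕ | 0 < I ∧ Insulated (n * I)}) ⟨_, primorial_pos _, insulated_mul_primorial_Pplus hn⟩

lemma primorial_Pplus_le_rad_mul_insulator {n : ℤ} (hn : n ≠ 0) :
    primorial (Pplus n) ≤ rad n * insulator n := by
  obtain ⟨hI, hins⟩ := insulator_pos_and_insulated hn
  have hI' : (insulator n : ℤ) ≠ 0 := by exact_mod_cast hI.ne'
  calc primorial (Pplus n) ≤ primorial (Pplus (n * insulator n)) :=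
        primorial_mono (Pplus_le_Pplus_of_dvd (dvd_mul_right _ _) hins.1)
    _ = rad (n * insulator n) := hins.rad_eq.symm
    _ ≤ rad n * rad (insulator n) :=
        Nat.le_of_dvd (Nat.mul_pos (rad_pos _) (rad_pos _)) (rad_mul_dvd hn hI')
    _ ≤ rad n * insulator n := Nat.mul_le_mul_left _ (rad_natCast_le hI)

lemma log_primorial_Pplus_le {n : ℤ} (hn : n ≠ 0) :
    log (primorial (Pplus n)) ≤ log (rad n) + log (insulator n) := by
  have hI := (insulator_pos_and_insulated hn).1
  rw [← log_mul (by exact_mod_cast (rad_pos n).ne') (by exact_mod_cast hI.ne')]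
  exact log_le_log (by exact_mod_cast primorial_pos _)
    (by exact_mod_cast primorial_Pplus_le_rad_mul_insulator hn)

lemma log_rad_le (n : ℤ) : log (rad n) ≤ log 4 * Pplus n := by
  rw [mul_comm, ← log_pow]
  exact log_le_log (by exact_mod_cast rad_pos n) (by exact_mod_cast
    (Nat.le_of_dvd (primorial_pos _) (rad_dvd_primorial_Pplus n)).trans (primorial_le_four_pow _))

theorem sandwich_general (n : ℕ → ℤ) (hn : ∀ k, n k ≠ 0)
    (htend : Tendsto (fun k => (Pplus (n k) : ℝ)) atTop atTop)
    (hbdd : ∃ B : ℕ, ∀ k, insulator (n k) ≤ B)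
    (α β : ℝ) (hα : α < Real.log 2) (hβ : Real.log 4 < β) :
    ∀ᶠ k in atTop,
      α * (Pplus (n k) : ℝ) < Real.log (rad (n k) : ℝ) ∧
      Real.log (rad (n k) : ℝ) < β * (Pplus (n k) : ℝ) := by
  obtain ⟨B, hB⟩ := hbdd
  have hP : Tendsto (fun k => Pplus (n k)) atTop atTop := tendsto_natCast_atTop_iff.mp htend
  filter_upwards [hP.eventually (eventually_lt_log_primorial hα (log B))] with k hk
  have hI := (insulator_pos_and_insulated (hn k)).1
  have hlogI : log (insulator (n k)) ≤ log B :=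
    log_le_log (by exact_mod_cast hI) (by exact_mod_cast hB k)
  have hP1 : (1 : ℝ) ≤ Pplus (n k) := by exact_mod_cast one_le_Pplus (n k)
  refine ⟨by linarith [log_primorial_Pplus_le (hn k)], ?_⟩
  nlinarith [log_rad_le (n k)]

/-- The sandwich lemma: if `P⁺(n_k) → ∞` and the insulators `𝔦(n_k)` are bounded,
then for `0 < α < log 2` and `β > log 4` we eventually have
`α P⁺(n_k) < log rad(n_k) < β P⁺(n_k)`. -/
theorem sandwich (n : ℕ → ℤ) (hn : ∀ k, n k ≠ 0)
    (htend : Tendsto (fun k => (Pplus (n k) : ℝ)) atTop atTop)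
    (hbdd : ∃ B : ℕ, ∀ k, insulator (n k) ≤ B)
    (α β : ℝ) (hα0 : 0 < α) (hα : α < Real.log 2) (hβ : Real.log 4 < β) :
    ∀ᶠ k in atTop,
      α * (Pplus (n k) : ℝ) < Real.log (rad (n k) : ℝ) ∧
      Real.log (rad (n k) : ℝ) < β * (Pplus (n k) : ℝ) :=
  sandwich_general n hn htend hbdd α β hα hβ
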